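/- Assume 0 < θ < 1. Let q ∈ ℝ^p be a unit vector with grad f(q) = 0, and suppose ζ = Aᵀq has exactly k nonzero entries, where 2 ≤ k ≤ r, each nonzero entry satisfying ζ_j² = α(q) > 0. Then there exists a unit vector v ∈ ℝ^p with vᵀq = 0 such that vᵀ Hess f(q) v ≤ −2(1−θ)/k < 0. -/

import Mathlib

open Matrix MeasureTheory ProbabilityTheory Real
open scoped BigOperators ENNReal

noncomputable section

/-- squared Euclidean norm -/
def l2sq {m : ℕ} (v : Fin m → ℝ) : ℝ := ∑ i, v i ^ 2

/-- fourth power of the ℓ₄ norm -/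
def l4p4 {m : ℕ} (v : Fin m → ℝ) : ℝ := ∑ i, v i ^ 4

/-- Euclidean norm -/
def l2norm {m : ℕ} (v : Fin m → ℝ) : ℝ := Real.sqrt (l2sq v)

/-- squared sup-norm -/
def linfSq {m : ℕ} (v : Fin m → ℝ) : ℝ := ⨆ i, (v i) ^ 2

/-- projection onto the orthogonal complement of q -/
def proj {p : ℕ} (q : Fin p → ℝ) : Matrix (Fin p) (Fin p) ℝ := 1 - Matrix.vecMulVec q q

def zeta {p r : ℕ} (A : Matrix (Fin p) (Fin r) ℝ) (q : Fin p → ℝ) : Fin r → ℝ := Aᵀ *ᵥ q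

/-- population objective -/
def fpop {p r : ℕ} (θ : ℝ) (A : Matrix (Fin p) (Fin r) ℝ) (q : Fin p → ℝ) : ℝ :=
  -(1/4) * ((1 - θ) * l4p4 (zeta A q) + θ * (l2sq (zeta A q)) ^ 2)

/-- Riemannian gradient of the population objective -/
def gradf {p r : ℕ} (θ : ℝ) (A : Matrix (Fin p) (Fin r) ℝ) (q : Fin p → ℝ) : Fin p → ℝ :=
  -((proj q) *ᵥ ((1 - θ) • (A *ᵥ fun j => (zeta A q j) ^ 3)
      + (θ * l2sq (zeta A q)) • (A *ᵥ zeta A q)))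

/-- Riemannian Hessian of the population objective -/
def hessf {p r : ℕ} (θ : ℝ) (A : Matrix (Fin p) (Fin r) ℝ) (q : Fin p → ℝ) :
    Matrix (Fin p) (Fin p) ℝ :=
  -((1 - θ) • (proj q *
      ((3 : ℝ) • (A * Matrix.diagonal (fun j => (zeta A q j) ^ 2) * Aᵀ)
        - l4p4 (zeta A q) • (1 : Matrix (Fin p) (Fin p) ℝ)) * proj q))
  - θ • (proj q *
      (l2sq (zeta A q) • (A * Aᵀ)
        + (2 : ℝ) • (A * Aᵀ * Matrix.vecMulVec q q * (A * Aᵀ))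
        - (l2sq (zeta A q)) ^ 2 • (1 : Matrix (Fin p) (Fin p) ℝ)) * proj q)

/-- quadratic form -/
def qform {p : ℕ} (M : Matrix (Fin p) (Fin p) ℝ) (v : Fin p → ℝ) : ℝ := v ⬝ᵥ (M *ᵥ v)

/-- α(q) -/
def alphaf {p r : ℕ} (θ : ℝ) (A : Matrix (Fin p) (Fin r) ℝ) (q : Fin p → ℝ) : ℝ :=
  l4p4 (zeta A q) + (θ / (1 - θ)) * ((l2sq (zeta A q)) ^ 2 - l2sq (zeta A q))

/-- columns of X -/
def colX {r n : ℕ} (X : Matrix (Fin r) (Fin n) ℝ) (k : Fin n) : Fin r → ℝ := fun i => X i k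

/-- finite-sample objective -/
def Ffun {p r n : ℕ} (θ σ : ℝ) (A : Matrix (Fin p) (Fin r) ℝ) (X : Matrix (Fin r) (Fin n) ℝ)
    (q : Fin p → ℝ) : ℝ :=
  -(1 / (12 * θ * σ ^ 4 * n)) * ∑ k : Fin n, (q ⬝ᵥ (A *ᵥ colX X k)) ^ 4

/-- Riemannian gradient of the finite-sample objective -/
def gradF {p r n : ℕ} (θ σ : ℝ) (A : Matrix (Fin p) (Fin r) ℝ) (X : Matrix (Fin r) (Fin n) ℝ)
    (q : Fin p → ℝ) : Fin p → ℝ :=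
  (-(1 / (3 * θ * σ ^ 4 * n))) •
    ((proj q) *ᵥ ∑ k : Fin n, ((q ⬝ᵥ (A *ᵥ colX X k)) ^ 3) • (A *ᵥ colX X k))

/-- Riemannian Hessian of the finite-sample objective -/
def hessF {p r n : ℕ} (θ σ : ℝ) (A : Matrix (Fin p) (Fin r) ℝ) (X : Matrix (Fin r) (Fin n) ℝ)
    (q : Fin p → ℝ) : Matrix (Fin p) (Fin p) ℝ :=
  (-(1 / (3 * θ * σ ^ 4 * n))) •
    ∑ k : Fin n, proj q *
      ((3 * (q ⬝ᵥ (A *ᵥ colX X k)) ^ 2) • Matrix.vecMulVec (A *ᵥ colX X k) (A *ᵥ colX X k)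
        - ((q ⬝ᵥ (A *ᵥ colX X k)) ^ 4) • (1 : Matrix (Fin p) (Fin p) ℝ)) * proj q

/-- spectral norm of a rectangular matrix -/
def opNorm {m n : ℕ} (M : Matrix (Fin m) (Fin n) ℝ) : ℝ :=
  ‖LinearMap.toContinuousLinearMap (Matrix.toEuclideanLin M)‖

/-- Bernoulli(θ) law on ℝ -/
def bernoulliReal (θ : ℝ) : Measure ℝ :=
  ENNReal.ofReal θ • Measure.dirac (1 : ℝ) + ENNReal.ofReal (1 - θ) • Measure.dirac (0 : ℝ)

/-- Bernoulli–Gaussian law BG(θ, σ²) on ℝ -/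
def bgLaw (θ σ2 : ℝ) : Measure ℝ :=
  ((bernoulliReal θ).prod (gaussianReal 0 σ2.toNNReal)).map fun p => p.1 * p.2

/-- law of a random vector in ℝ^r with i.i.d. BG(θ, σ²) entries -/
def bgVec (r : ℕ) (θ σ2 : ℝ) : Measure (Fin r → ℝ) :=
  Measure.pi fun _ : Fin r => bgLaw θ σ2

/-- law of a random r×n matrix with i.i.d. BG(θ, σ²) entries -/
def bgMatrix (r n : ℕ) (θ σ2 : ℝ) : Measure (Fin r → Fin n → ℝ) :=
  Measure.pi fun _ : Fin r => Measure.pi fun _ : Fin n => bgLaw θ σ2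


/-!
On the support of `ζ = Aᵀq` every `ζ_j²` equals `α`, so `‖ζ‖₂² = kα` and `‖ζ‖₄⁴ = kα²`, and the
defining equation of `α` then factors as `((1-θ)α + θkα)(1 - kα) = 0`, forcing `α = 1/k`.
For two support indices `i ≠ j` take `u = ζ_j a_i - ζ_i a_j`: since `Aᵀu = ζ_j e_i - ζ_i e_j` is
orthogonal to `ζ`, `u` is orthogonal to `q` and to `AAᵀq`, so the projections and the rank-one term
of the Hessian drop out and `uᵀ Hess f(q) u = -4(1-θ)α²` with `‖u‖² = 2α`. Normalizing `u` gives
the value `-2(1-θ)α = -2(1-θ)/k`.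
-/

open Finset

lemma l2sq_eq_dotProduct {m : ℕ} (v : Fin m → ℝ) : l2sq v = v ⬝ᵥ v := by
  simp only [l2sq, dotProduct, sq]

lemma l2sq_smul {m : ℕ} (c : ℝ) (v : Fin m → ℝ) : l2sq (c • v) = c ^ 2 * l2sq v := by
  simp only [l2sq, Pi.smul_apply, smul_eq_mul, mul_pow, mul_sum]

lemma qform_smul {m : ℕ} (M : Matrix (Fin m) (Fin m) ℝ) (c : ℝ) (v : Fin m → ℝ) :
    qform M (c • v) = c ^ 2 * qform M v := by
  simp only [qform, mulVec_smul, smul_dotProduct, dotProduct_smul, smul_eq_mul]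
  ring

lemma exists_unit_qform_eq_div {m : ℕ} (M : Matrix (Fin m) (Fin m) ℝ) {q u : Fin m → ℝ}
    (hu : 0 < l2sq u) (huq : u ⬝ᵥ q = 0) :
    ∃ v, l2sq v = 1 ∧ v ⬝ᵥ q = 0 ∧ qform M v = qform M u / l2sq u := by
  refine ⟨(√(l2sq u))⁻¹ • u, ?_, ?_, ?_⟩
  · rw [l2sq_smul, inv_pow, sq_sqrt hu.le, inv_mul_cancel₀ hu.ne']
  · rw [smul_dotProduct, huq, smul_zero]
  · rw [qform_smul, inv_pow, sq_sqrt hu.le, inv_mul_eq_div]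

lemma qform_sub {m : ℕ} (M N : Matrix (Fin m) (Fin m) ℝ) (v : Fin m → ℝ) :
    qform (M - N) v = qform M v - qform N v := by
  simp only [qform, sub_mulVec, dotProduct_sub]

lemma qform_add {m : ℕ} (M N : Matrix (Fin m) (Fin m) ℝ) (v : Fin m → ℝ) :
    qform (M + N) v = qform M v + qform N v := by
  simp only [qform, add_mulVec, dotProduct_add]

lemma qform_smul_left {m : ℕ} (c : ℝ) (M : Matrix (Fin m) (Fin m) ℝ) (v : Fin m → ℝ) :
    qform (c • M) v = c * qform M v := by
  simp only [qform, smul_mulVec, dotProduct_smul, smul_eq_mul]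

lemma qform_neg {m : ℕ} (M : Matrix (Fin m) (Fin m) ℝ) (v : Fin m → ℝ) :
    qform (-M) v = -qform M v := by
  simp only [qform, neg_mulVec, dotProduct_neg]

lemma qform_one {m : ℕ} (v : Fin m → ℝ) : qform 1 v = l2sq v := by
  rw [qform, one_mulVec, l2sq_eq_dotProduct]

lemma qform_diagonal {m : ℕ} (d v : Fin m → ℝ) : qform (diagonal d) v = ∑ i, d i * v i ^ 2 := by
  simp only [qform, dotProduct, mulVec_diagonal]
  exact sum_congr rfl fun i _ => by ring

lemma proj_mulVec_of_dotProduct_eq_zero {m : ℕ} {q u : Fin m → ℝ} (h : q ⬝ᵥ u = 0) :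
    proj q *ᵥ u = u := by
  rw [proj, sub_mulVec, one_mulVec, vecMulVec_mulVec, h]
  simp

lemma vecMul_proj_of_dotProduct_eq_zero {m : ℕ} {q u : Fin m → ℝ} (h : q ⬝ᵥ u = 0) :
    u ᵥ* proj q = u := by
  rw [proj, vecMul_sub, vecMul_one, vecMul_vecMulVec, dotProduct_comm, h, zero_smul, sub_zero]

lemma qform_proj_mul_proj {m : ℕ} (M : Matrix (Fin m) (Fin m) ℝ) {q u : Fin m → ℝ}
    (h : q ⬝ᵥ u = 0) : qform (proj q * M * proj q) u = qform M u := by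
  rw [qform, ← mulVec_mulVec, proj_mulVec_of_dotProduct_eq_zero h, ← mulVec_mulVec,
    dotProduct_mulVec, vecMul_proj_of_dotProduct_eq_zero h, qform]

section OrthonormalColumns

variable {p r : ℕ} {A : Matrix (Fin p) (Fin r) ℝ}

lemma vecMul_mulVec_of_transpose_mul_eq_one (hA : Aᵀ * A = 1) (w : Fin r → ℝ) :
    (A *ᵥ w) ᵥ* A = w := by
  rw [← vecMul_transpose, vecMul_vecMul, hA, vecMul_one]

lemma qform_mul_mul_transpose_mulVec (hA : Aᵀ * A = 1) (B : Matrix (Fin r) (Fin r) ℝ)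
    (w : Fin r → ℝ) : qform (A * B * Aᵀ) (A *ᵥ w) = qform B w := by
  rw [qform, ← mulVec_mulVec, ← mulVec_mulVec, mulVec_transpose,
    vecMul_mulVec_of_transpose_mul_eq_one hA, dotProduct_mulVec,
    vecMul_mulVec_of_transpose_mul_eq_one hA, qform]

lemma l2sq_mulVec_of_transpose_mul_eq_one (hA : Aᵀ * A = 1) (w : Fin r → ℝ) :
    l2sq (A *ᵥ w) = l2sq w := by
  rw [l2sq_eq_dotProduct, dotProduct_mulVec, vecMul_mulVec_of_transpose_mul_eq_one hA,
    l2sq_eq_dotProduct]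

lemma dotProduct_mulVec_eq_zeta_dotProduct (q : Fin p → ℝ) (w : Fin r → ℝ) :
    q ⬝ᵥ (A *ᵥ w) = zeta A q ⬝ᵥ w := by
  rw [dotProduct_mulVec, zeta, mulVec_transpose]

lemma qform_hessf_mulVec (hA : Aᵀ * A = 1) (θ : ℝ) {q : Fin p → ℝ} {w : Fin r → ℝ}
    (hw : zeta A q ⬝ᵥ w = 0) :
    qform (hessf θ A q) (A *ᵥ w) =
      -(1 - θ) * (3 * ∑ j, zeta A q j ^ 2 * w j ^ 2 - l4p4 (zeta A q) * l2sq w)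
        - θ * (l2sq (zeta A q) * l2sq w - l2sq (zeta A q) ^ 2 * l2sq w) := by
  have hqw : q ⬝ᵥ (A *ᵥ w) = 0 := by rwa [dotProduct_mulVec_eq_zeta_dotProduct]
  have hrank_one : (A * Aᵀ * vecMulVec q q * (A * Aᵀ)) *ᵥ (A *ᵥ w) = 0 := by
    rw [← mulVec_mulVec, ← mulVec_mulVec, vecMulVec_mulVec, mulVec_mulVec, Matrix.mul_assoc,
      hA, Matrix.mul_one, hqw]
    simp
  have hAAt : qform (A * Aᵀ) (A *ᵥ w) = l2sq w := by
    simpa only [Matrix.mul_one, qform_one] using qform_mul_mul_transpose_mulVec hA 1 w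
  rw [hessf, qform_sub, qform_neg, qform_smul_left, qform_smul_left,
    qform_proj_mul_proj _ hqw, qform_proj_mul_proj _ hqw]
  simp only [qform_sub, qform_add, qform_smul_left, qform_one]
  rw [qform_mul_mul_transpose_mulVec hA, qform_diagonal, hAAt, qform, hrank_one,
    dotProduct_zero, l2sq_mulVec_of_transpose_mul_eq_one hA]
  ring

end OrthonormalColumns

section ConstantModulus

variable {r : ℕ} {ζ : Fin r → ℝ} {α : ℝ}

lemma sum_sq_pow_eq_card_support_mul (h : ∀ j, ζ j ≠ 0 → ζ j ^ 2 = α) {n : ℕ} (hn : n ≠ 0) :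
    ∑ j, (ζ j ^ 2) ^ n = #{j | ζ j ≠ 0} * α ^ n := by
  rw [← sum_filter_of_ne fun j _ hj => by simpa [hn] using hj,
    sum_congr rfl fun j hj => by rw [h j (mem_filter.mp hj).2], sum_const, nsmul_eq_mul]

lemma l2sq_eq_card_support_mul (h : ∀ j, ζ j ≠ 0 → ζ j ^ 2 = α) :
    l2sq ζ = #{j | ζ j ≠ 0} * α := by
  simpa only [l2sq, pow_one] using sum_sq_pow_eq_card_support_mul h one_ne_zero

lemma l4p4_eq_card_support_mul_sq (h : ∀ j, ζ j ≠ 0 → ζ j ^ 2 = α) :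
    l4p4 ζ = #{j | ζ j ≠ 0} * α ^ 2 := by
  simpa only [l4p4, ← pow_mul, Nat.reduceMul] using sum_sq_pow_eq_card_support_mul h two_ne_zero

end ConstantModulus

section TwoPointDirection

variable {r : ℕ} (ζ : Fin r → ℝ) {i j : Fin r}

lemma dotProduct_single_sub_single : ζ ⬝ᵥ (Pi.single i (ζ j) - Pi.single j (ζ i)) = 0 := by
  rw [dotProduct_sub, dotProduct_single, dotProduct_single, mul_comm, sub_self]

lemma l2sq_single_sub_single (hij : i ≠ j) :
    l2sq (Pi.single i (ζ j) - Pi.single j (ζ i)) = ζ i ^ 2 + ζ j ^ 2 := by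
  rw [l2sq, Fintype.sum_eq_add i j hij]
  · simp [hij, hij.symm, add_comm]
  · intro b hb
    simp [hb.1, hb.2]

lemma sum_sq_mul_sq_single_sub_single (hij : i ≠ j) :
    ∑ b, ζ b ^ 2 * (Pi.single i (ζ j) - Pi.single j (ζ i) : Fin r → ℝ) b ^ 2
      = 2 * ζ i ^ 2 * ζ j ^ 2 := by
  rw [Fintype.sum_eq_add i j hij]
  · simp only [Pi.sub_apply, Pi.single_eq_same, ne_eq, hij, hij.symm, not_false_eq_true,
      Pi.single_eq_of_ne, sub_zero, zero_sub, even_two, Even.neg_pow]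
    ring
  · intro b hb
    simp [hb.1, hb.2]

end TwoPointDirection

lemma card_support_mul_alphaf_eq_one {p r : ℕ} {A : Matrix (Fin p) (Fin r) ℝ} {θ : ℝ}
    {q : Fin p → ℝ} (hθ0 : 0 < θ) (hθ : θ < 1)
    (hval : ∀ j, zeta A q j ≠ 0 → zeta A q j ^ 2 = alphaf θ A q) (hpos : 0 < alphaf θ A q) :
    #{j | zeta A q j ≠ 0} * alphaf θ A q = 1 := by
  set k : ℝ := ↑(#{j | zeta A q j ≠ 0})
  set α := alphaf θ A q
  have hfixed : alphaf θ A q = k * α ^ 2 + θ / (1 - θ) * ((k * α) ^ 2 - k * α) := by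
    rw [alphaf, l2sq_eq_card_support_mul hval, l4p4_eq_card_support_mul_sq hval]
  have hfactor : ((1 - θ) * α + θ * k * α) * (1 - k * α) = 0 := by
    field_simp [(sub_pos.mpr hθ).ne'] at hfixed
    linear_combination hfixed
  have hk : 0 ≤ k := Nat.cast_nonneg _
  have hcoeff : 0 < (1 - θ) * α + θ * k * α := by
    nlinarith [mul_nonneg (mul_nonneg hθ0.le hk) hpos.le]
  linarith [(mul_eq_zero.mp hfactor).resolve_left hcoeff.ne']

theorem stmt7_general (p r : ℕ)
    (A : Matrix (Fin p) (Fin r) ℝ) (hA : Aᵀ * A = 1)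
    (θ : ℝ) (hθ0 : 0 < θ) (hθ : θ < 1)
    (q : Fin p → ℝ)
    (k : ℕ) (hk2 : 2 ≤ k)
    (hcard : (Finset.univ.filter fun j : Fin r => zeta A q j ≠ 0).card = k)
    (hval : ∀ j : Fin r, zeta A q j ≠ 0 → (zeta A q j) ^ 2 = alphaf θ A q)
    (hpos : 0 < alphaf θ A q) :
    ∃ v : Fin p → ℝ, l2sq v = 1 ∧ v ⬝ᵥ q = 0 ∧
      qform (hessf θ A q) v ≤ -(2*(1-θ))/k ∧ qform (hessf θ A q) v < 0 := by
  set ζ := zeta A q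
  set α := alphaf θ A q
  have hk : (0 : ℝ) < k := by exact_mod_cast (by omega : 0 < k)
  have hkα : (k : ℝ) * α = 1 := hcard ▸ card_support_mul_alphaf_eq_one hθ0 hθ hval hpos
  obtain ⟨i, hi, j, hj, hij⟩ := one_lt_card.mp (hcard ▸ hk2 : 1 < #{j | ζ j ≠ 0})
  have hζi : ζ i ^ 2 = α := hval i (mem_filter.mp hi).2
  have hζj : ζ j ^ 2 = α := hval j (mem_filter.mp hj).2
  set w : Fin r → ℝ := Pi.single i (ζ j) - Pi.single j (ζ i)
  have hζw : ζ ⬝ᵥ w = 0 := dotProduct_single_sub_single ζ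
  have hnorm : l2sq (A *ᵥ w) = 2 * α := by
    rw [l2sq_mulVec_of_transpose_mul_eq_one hA, l2sq_single_sub_single ζ hij, hζi, hζj]
    ring
  have hhess : qform (hessf θ A q) (A *ᵥ w) = -(4 * (1 - θ) * α ^ 2) := by
    rw [qform_hessf_mulVec hA θ hζw, sum_sq_mul_sq_single_sub_single ζ hij,
      l2sq_single_sub_single ζ hij, l2sq_eq_card_support_mul hval,
      l4p4_eq_card_support_mul_sq hval, hcard, hζi, hζj]
    linear_combination 2 * α ^ 2 * (1 - θ + θ * k) * hkα
  have huq : (A *ᵥ w) ⬝ᵥ q = 0 := by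
    rw [dotProduct_comm, dotProduct_mulVec_eq_zeta_dotProduct, hζw]
  obtain ⟨v, hv1, hvq, hv⟩ :=
    exists_unit_qform_eq_div (hessf θ A q) (by rw [hnorm]; positivity) huq
  have hvalue : qform (hessf θ A q) v = -(2 * (1 - θ)) / k := by
    rw [hv, hhess, hnorm, div_eq_div_iff (by positivity) hk.ne']
    linear_combination -4 * (1 - θ) * α * hkα
  exact ⟨v, hv1, hvq, hvalue.le, hvalue ▸ div_neg_of_neg_of_pos (by linarith) hk⟩

theorem stmt7 (p r : ℕ) (hr : 1 ≤ r) (hrp : r ≤ p)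
    (A : Matrix (Fin p) (Fin r) ℝ) (hA : Aᵀ * A = 1)
    (θ : ℝ) (hθ0 : 0 < θ) (hθ : θ < 1)
    (q : Fin p → ℝ) (hq : l2sq q = 1)
    (hgrad : gradf θ A q = 0)
    (k : ℕ) (hk2 : 2 ≤ k) (hkr : k ≤ r)
    (hcard : (Finset.univ.filter fun j : Fin r => zeta A q j ≠ 0).card = k)
    (hval : ∀ j : Fin r, zeta A q j ≠ 0 → (zeta A q j) ^ 2 = alphaf θ A q)
    (hpos : 0 < alphaf θ A q) :
    ∃ v : Fin p → ℝ, l2sq v = 1 ∧ v ⬝ᵥ q = 0 ∧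
      qform (hessf θ A q) v ≤ -(2*(1-θ))/k ∧ qform (hessf θ A q) v < 0 :=
  stmt7_general p r A hA θ hθ0 hθ q k hk2 hcard hval hpos
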